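/- For w, w' in W, let N^{w,w'} ∈ ℤ[q] be the trace of the ℚ(q)-linear map h ↦ T_w h T_{w'}^{-1} on the Iwahori–Hecke algebra H of W. Then, setting n = ℓ(w)+ℓ(w'), the coefficient of q^i in N^{w,w'} vanishes for i > n, and the coefficient of q^n equals the number of elements a' ∈ W such that the support of w is contained in the left descent set of a' and the support of w' is contained in the right descent set of a'; in particular this leading coefficient is positive. -/

import Mathlib

open Polynomial

/-- The support of `w`: the set of simple-reflection indices appearing in some
(equivalently, any) reduced word for `w`. -/
def CoxeterSystem.support {B W : Type} [Group W] {M : CoxeterMatrix B}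
    (cs : CoxeterSystem M W) (w : W) : Set B :=
  {i | ∃ l : List B, cs.IsReduced l ∧ cs.wordProd l = w ∧ i ∈ l}

/-!
In the basis `(T_a)`, left multiplication by `T_s` acts by `T_a ↦ T_{sa}` when `ℓ(sa) > ℓ(a)`
and by `T_a ↦ q T_{sa} + (q - 1) T_a` when `ℓ(sa) < ℓ(a)`, and similarly on the right. So along
reduced words for `w` and `w'⁻¹`, the map `h ↦ T_w h T_{w'⁻¹}` is a product of `n` matrices
with entries in `ℤ[q]` of degree at most one. The trace therefore has degree at most `n`, and
its `q^n` coefficient is the trace of the product of the `q`-coefficient matrices. These are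
triangular with respect to length, with diagonal entry `1` at `a` exactly when the letter is a
descent of `a`; so the top coefficient counts the `a` having every letter of both words as a
(left, resp. right) descent. As the matrix of `T_w` does not depend on the reduced word chosen,
this condition depends on the support only. The longest element of `W` shows the count is
positive.
-/

namespace Matrix

section Triangular

variable {ι α R : Type*} [Preorder α] [Semiring R] {f : ι → α}

def IsTriangularBy (f : ι → α) (A : Matrix ι ι R) : Prop :=
  ∀ b a, A b a ≠ 0 → b = a ∨ f b < f a

theorem isTriangularBy_one [DecidableEq ι] : (1 : Matrix ι ι R).IsTriangularBy f :=
  fun b a h => .inl (by by_contra hba; exact h (one_apply_ne hba))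

variable [Fintype ι]

theorem IsTriangularBy.mul {A B : Matrix ι ι R} (hA : A.IsTriangularBy f)
    (hB : B.IsTriangularBy f) : (A * B).IsTriangularBy f := by
  intro b a h
  obtain ⟨c, -, hc⟩ := Finset.exists_ne_zero_of_sum_ne_zero h
  rcases hA b c (left_ne_zero_of_mul hc) with rfl | hbc
  · exact hB b a (right_ne_zero_of_mul hc)
  · rcases hB c a (right_ne_zero_of_mul hc) with rfl | hca
    exacts [.inr hbc, .inr (hbc.trans hca)]

theorem IsTriangularBy.mul_apply_self {A B : Matrix ι ι R} (hA : A.IsTriangularBy f)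
    (hB : B.IsTriangularBy f) (a : ι) : (A * B) a a = A a a * B a a := by
  refine Finset.sum_eq_single a (fun c _ hca => ?_) (by simp)
  by_contra hc
  rcases hA a c (left_ne_zero_of_mul hc) with rfl | hac
  · exact hca rfl
  rcases hB c a (right_ne_zero_of_mul hc) with rfl | hca'
  exacts [hca rfl, hac.not_gt hca']

variable [DecidableEq ι] {Ms : List (Matrix ι ι R)}

theorem isTriangularBy_list_prod (h : ∀ A ∈ Ms, A.IsTriangularBy f) :
    Ms.prod.IsTriangularBy f := by
  induction Ms with
  | nil => exact isTriangularBy_one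
  | cons A Ms ih =>
    exact (h A List.mem_cons_self).mul (ih fun B hB => h B (List.mem_cons_of_mem A hB))

theorem list_prod_apply_self_of_isTriangularBy (h : ∀ A ∈ Ms, A.IsTriangularBy f) (a : ι) :
    Ms.prod a a = (Ms.map (· a a)).prod := by
  induction Ms with
  | nil => simp
  | cons A Ms ih =>
    have hMs : ∀ B ∈ Ms, B.IsTriangularBy f := fun B hB => h B (List.mem_cons_of_mem A hB)
    rw [List.prod_cons, (h A List.mem_cons_self).mul_apply_self (isTriangularBy_list_prod hMs),
      ih hMs, List.map_cons, List.prod_cons]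

end Triangular

section PolynomialEntries

variable {ι R : Type*} [Fintype ι] [DecidableEq ι] [CommRing R] {d : ℕ}

theorem natDegree_matPolyEquiv_le {A : Matrix ι ι R[X]} (h : ∀ b a, (A b a).natDegree ≤ d) :
    (matPolyEquiv A).natDegree ≤ d := by
  refine natDegree_le_iff_coeff_eq_zero.2 fun k hk => ?_
  ext b a
  rw [matPolyEquiv_coeff_apply]
  exact coeff_eq_zero_of_natDegree_lt ((h b a).trans_lt hk)

variable {Ms : List (Matrix ι ι R[X])}

theorem coeff_list_prod_apply_eq_zero (h : ∀ A ∈ Ms, ∀ b a, (A b a).natDegree ≤ d) {k : ℕ}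
    (hk : Ms.length * d < k) (b a : ι) : (Ms.prod b a).coeff k = 0 := by
  rw [← matPolyEquiv_coeff_apply, map_list_prod]
  have hdeg : (Ms.map matPolyEquiv).prod.natDegree ≤ Ms.length * d := by
    refine (natDegree_list_prod_le _).trans ?_
    have hle : ∀ n ∈ (Ms.map matPolyEquiv).map natDegree, n ≤ d := by
      simpa using fun A hA => natDegree_matPolyEquiv_le (h A hA)
    simpa using List.sum_le_card_nsmul _ d hle
  rw [coeff_eq_zero_of_natDegree_lt (hdeg.trans_lt hk)]
  rfl

theorem coeff_list_prod_apply (h : ∀ A ∈ Ms, ∀ b a, (A b a).natDegree ≤ d) (b a : ι) :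
    (Ms.prod b a).coeff (Ms.length * d) = (Ms.map (·.map (coeff · d))).prod b a := by
  rw [← matPolyEquiv_coeff_apply, map_list_prod, ← Ms.length_map matPolyEquiv,
    coeff_list_prod_of_natDegree_le _ _ ?_]
  · have hcoeff : (coeff · d) ∘ matPolyEquiv = fun A : Matrix ι ι R[X] => A.map (coeff · d) := by
      funext A
      ext
      simp
    rw [List.map_map, hcoeff]
  · simp only [List.mem_map]
    rintro _ ⟨A, hA, rfl⟩
    exact natDegree_matPolyEquiv_le (h A hA)

end PolynomialEntries

end Matrix

theorem List.prod_map_boole {α M : Type*} [CommMonoidWithZero M] (p : α → Prop)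
    [DecidablePred p] (l : List α) :
    (l.map fun a => if p a then (1 : M) else 0).prod = if ∀ a ∈ l, p a then 1 else 0 := by
  induction l with
  | nil => simp
  | cons a l ih => by_cases ha : p a <;> simp [ih, ha]

section HeckeMatrix

open scoped Classical

variable {ι R : Type*} [CommRing R]

/-- The matrix, with `q = X`, of `T_a ↦ q T_{σ a} + (q - 1) T_a` for `D a` and `T_a ↦ T_{σ a}`
otherwise. -/
noncomputable def heckeMatrix (σ : ι → ι) (D : ι → Prop) : Matrix ι ι R[X] :=
  Matrix.of fun b a =>
    if D a then (if b = σ a then X else if b = a then X - 1 else 0)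
    else if b = σ a then 1 else 0

theorem natDegree_heckeMatrix_apply_le (σ : ι → ι) (D : ι → Prop) (b a : ι) :
    (heckeMatrix (R := R) σ D b a).natDegree ≤ 1 := by
  simp only [heckeMatrix, Matrix.of_apply]
  split_ifs <;> compute_degree!

theorem coeff_heckeMatrix_apply_self (σ : ι → ι) (D : ι → Prop) (a : ι) :
    (heckeMatrix (R := R) σ D a a).coeff 1 = if D a then 1 else 0 := by
  simp only [heckeMatrix, Matrix.of_apply]
  split_ifs <;> simp [coeff_one]

variable {α : Type*} [Preorder α]

theorem isTriangularBy_heckeMatrix (f : ι → α) {σ : ι → ι} {D : ι → Prop}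
    (hσ : ∀ a, D a → f (σ a) < f a) :
    ((heckeMatrix (R := R) σ D).map (coeff · 1)).IsTriangularBy f := by
  intro b a h
  simp only [heckeMatrix, Matrix.map_apply, Matrix.of_apply] at h
  split_ifs at h with hD hσa hba <;>
    first | exact .inr (hσa ▸ hσ a hD) | exact .inl hba | simp [coeff_one] at h

theorem coeff_list_prod_heckeMatrix_apply_self [Fintype ι] [DecidableEq ι] (f : ι → α)
    {Ms : List (Matrix ι ι R[X])}
    (hMs : ∀ A ∈ Ms, ∃ σ D, (∀ a, D a → f (σ a) < f a) ∧ A = heckeMatrix σ D) (a : ι) :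
    (Ms.prod a a).coeff Ms.length = (Ms.map fun A => (A a a).coeff 1).prod := by
  have hdeg : ∀ A ∈ Ms, ∀ b a, (A b a).natDegree ≤ 1 := by
    intro A hA
    obtain ⟨σ, D, -, rfl⟩ := hMs A hA
    exact natDegree_heckeMatrix_apply_le σ D
  have htri : ∀ A ∈ Ms.map (·.map (coeff · 1)), A.IsTriangularBy f := by
    simp only [List.mem_map]
    rintro _ ⟨A, hA, rfl⟩
    obtain ⟨σ, D, hσ, rfl⟩ := hMs A hA
    exact isTriangularBy_heckeMatrix f hσ
  rw [← mul_one Ms.length, Matrix.coeff_list_prod_apply hdeg,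
    Matrix.list_prod_apply_self_of_isTriangularBy htri, List.map_map]
  rfl

variable {K H : Type*} [Fintype ι] [CommRing K] [Algebra R[X] K] [Ring H] [Algebra K H]

local notation "θ" => algebraMap R[X] K

theorem LinearMap.toMatrix_eq_map_heckeMatrix (T : Module.Basis ι K H) (f : H →ₗ[K] H)
    {σ : ι → ι} {D : ι → Prop} (hσ : ∀ a, D a → σ a ≠ a)
    (hD : ∀ a, D a → f (T a) = θ X • T (σ a) + (θ X - 1) • T a)
    (hnD : ∀ a, ¬D a → f (T a) = T (σ a)) :
    LinearMap.toMatrix T T f = (heckeMatrix σ D).map θ := by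
  ext b a
  rw [LinearMap.toMatrix_apply, Matrix.map_apply]
  by_cases ha : D a
  · rw [hD a ha]
    simp only [heckeMatrix, Matrix.of_apply, if_pos ha, map_add, map_smul, Finsupp.add_apply,
      Finsupp.smul_apply, Module.Basis.repr_self, Finsupp.single_apply]
    rcases eq_or_ne b (σ a) with rfl | hb
    · simp [(hσ a ha).symm]
    rcases eq_or_ne b a with rfl | hb'
    · simp [hb, hσ b ha]
    · simp [hb.symm, hb'.symm, hb, hb']
  · rw [hnD a ha]
    simp only [heckeMatrix, Matrix.of_apply, if_neg ha, Module.Basis.repr_self,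
      Finsupp.single_apply, eq_comm (a := σ a)]
    split_ifs <;> simp

end HeckeMatrix

namespace CoxeterSystem

section HeckeWordMatrix

open scoped Classical

variable {B W : Type*} [Group W] {M : CoxeterMatrix B} (cs : CoxeterSystem M W) (R : Type*)
  [CommRing R]

noncomputable def leftHeckeMatrix (i : B) : Matrix W W R[X] :=
  heckeMatrix (cs.simple i * ·) (cs.IsLeftDescent · i)

noncomputable def rightHeckeMatrix (i : B) : Matrix W W R[X] :=
  heckeMatrix (· * cs.simple i) (cs.IsRightDescent · i)

/-- Over `R[q]`, the matrix of `h ↦ T_{π l} * h * T_{π m}`; right multiplications compose in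
reverse order. -/
noncomputable def heckeWordMatrix [Fintype W] (l m : List B) : Matrix W W R[X] :=
  (l.map (cs.leftHeckeMatrix R) ++ (m.map (cs.rightHeckeMatrix R)).reverse).prod

variable {cs R}

theorem coeff_trace_heckeWordMatrix_eq_zero [Fintype W] {l m : List B} {k : ℕ}
    (hk : l.length + m.length < k) : (cs.heckeWordMatrix R l m).trace.coeff k = 0 := by
  rw [Matrix.trace, finsetSum_coeff]
  refine Finset.sum_eq_zero fun a _ =>
    Matrix.coeff_list_prod_apply_eq_zero (d := 1) ?_ (by simpa using hk) a a
  simp only [List.mem_append, List.mem_reverse, List.mem_map]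
  rintro _ (⟨i, -, rfl⟩ | ⟨i, -, rfl⟩) <;> exact natDegree_heckeMatrix_apply_le _ _

theorem coeff_heckeWordMatrix_apply_self [Fintype W] (l m : List B) (a : W) :
    (cs.heckeWordMatrix R l m a a).coeff (l.length + m.length) =
      if (∀ i ∈ l, cs.IsLeftDescent a i) ∧ ∀ i ∈ m, cs.IsRightDescent a i then 1 else 0 := by
  have hlen : l.length + m.length =
      (l.map (cs.leftHeckeMatrix R) ++ (m.map (cs.rightHeckeMatrix R)).reverse).length := by
    simp
  rw [heckeWordMatrix, hlen, coeff_list_prod_heckeMatrix_apply_self cs.length]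
  · simp only [List.map_append, List.map_reverse, List.map_map, List.prod_append,
      List.prod_reverse, Function.comp_def, leftHeckeMatrix, rightHeckeMatrix,
      coeff_heckeMatrix_apply_self, List.prod_map_boole, ite_zero_mul_ite_zero, mul_one]
  · simp only [List.mem_append, List.mem_reverse, List.mem_map]
    rintro _ (⟨i, -, rfl⟩ | ⟨i, -, rfl⟩)
    exacts [⟨_, _, fun _ h => h, rfl⟩, ⟨_, _, fun _ h => h, rfl⟩]

theorem coeff_trace_heckeWordMatrix [Fintype W] (l m : List B) :
    (cs.heckeWordMatrix R l m).trace.coeff (l.length + m.length) =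
      ({a | (∀ i ∈ l, cs.IsLeftDescent a i) ∧ ∀ i ∈ m, cs.IsRightDescent a i} : Set W).ncard := by
  simp only [Matrix.trace, Matrix.diag_apply, finsetSum_coeff, coeff_heckeWordMatrix_apply_self,
    Finset.sum_boole, Set.ncard_eq_toFinset_card', Set.toFinset_ofPred]

end HeckeWordMatrix

section HeckeBasis

variable {B W : Type*} [Group W] {M : CoxeterMatrix B} {cs : CoxeterSystem M W}

theorem exists_forall_isLeftDescent_and_isRightDescent [Finite W] :
    ∃ a : W, ∀ i, cs.IsLeftDescent a i ∧ cs.IsRightDescent a i := by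
  obtain ⟨a, ha⟩ := Finite.exists_max cs.length
  exact ⟨a, fun i => ⟨(ha _).lt_of_ne (cs.length_simple_mul_ne a i),
    (ha _).lt_of_ne (cs.length_mul_simple_ne a i)⟩⟩

variable {K H : Type*} [CommRing K] [Ring H] [Algebra K H]

variable (cs) in
structure IsHeckeBasis (q : K) (T : Module.Basis W K H) : Prop where
  one : T 1 = 1
  mul_of_length_add : ∀ w w', cs.length (w * w') = cs.length w + cs.length w' →
    T w * T w' = T (w * w')
  quadratic : ∀ i, (T (cs.simple i) + 1) * (T (cs.simple i) - algebraMap K H q) = 0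

namespace IsHeckeBasis

variable {q : K} {T : Module.Basis W K H}

theorem simple_mul_self (hT : cs.IsHeckeBasis q T) (i : B) :
    T (cs.simple i) * T (cs.simple i) = (q - 1) • T (cs.simple i) + q • 1 := by
  have h := hT.quadratic i
  rw [Algebra.algebraMap_eq_smul_one, add_mul, mul_sub, mul_sub, one_mul, one_mul,
    mul_smul_one] at h
  rw [sub_smul, one_smul, ← sub_eq_zero, ← h]
  abel

theorem simple_mul_of_isLeftDescent (hT : cs.IsHeckeBasis q T) {a : W} {i : B}
    (h : cs.IsLeftDescent a i) :
    T (cs.simple i) * T a = q • T (cs.simple i * a) + (q - 1) • T a := by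
  have hfac : T (cs.simple i) * T (cs.simple i * a) = T a := by
    rw [hT.mul_of_length_add, simple_mul_simple_cancel_left]
    rw [simple_mul_simple_cancel_left, length_simple]
    exact ((cs.isLeftDescent_iff).1 h).symm.trans (add_comm _ _)
  rw [← hfac, ← mul_assoc, hT.simple_mul_self, add_mul, smul_mul_assoc, smul_mul_assoc, one_mul,
    hfac, add_comm]

theorem simple_mul_of_not_isLeftDescent (hT : cs.IsHeckeBasis q T) {a : W} {i : B}
    (h : ¬cs.IsLeftDescent a i) : T (cs.simple i) * T a = T (cs.simple i * a) :=
  hT.mul_of_length_add _ _ <| by rw [length_simple, add_comm]; exact cs.not_isLeftDescent_iff.1 h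

theorem mul_simple_of_isRightDescent (hT : cs.IsHeckeBasis q T) {a : W} {i : B}
    (h : cs.IsRightDescent a i) :
    T a * T (cs.simple i) = q • T (a * cs.simple i) + (q - 1) • T a := by
  have hfac : T (a * cs.simple i) * T (cs.simple i) = T a := by
    rw [hT.mul_of_length_add, simple_mul_simple_cancel_right]
    rw [simple_mul_simple_cancel_right, length_simple]
    exact ((cs.isRightDescent_iff).1 h).symm
  rw [← hfac, mul_assoc, hT.simple_mul_self, mul_add, mul_smul_comm, mul_smul_comm, mul_one,
    hfac, add_comm]

theorem mul_simple_of_not_isRightDescent (hT : cs.IsHeckeBasis q T) {a : W} {i : B}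
    (h : ¬cs.IsRightDescent a i) : T a * T (cs.simple i) = T (a * cs.simple i) :=
  hT.mul_of_length_add _ _ <| by rw [length_simple]; exact cs.not_isRightDescent_iff.1 h

theorem wordProd_of_isReduced (hT : cs.IsHeckeBasis q T) {l : List B} (hl : cs.IsReduced l) :
    T (cs.wordProd l) = (l.map (T ∘ cs.simple)).prod := by
  induction l with
  | nil => exact hT.one
  | cons i l ih =>
    have htail : cs.IsReduced l := hl.drop 1
    rw [wordProd_cons, ← hT.mul_of_length_add, ih htail, List.map_cons, List.prod_cons,
      Function.comp_apply]
    rw [← wordProd_cons, hl, htail, length_simple, List.length_cons, add_comm]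

open scoped Classical

variable [Fintype W] (R : Type*) [CommRing R] [Algebra R[X] K]

local notation "θ" => algebraMap R[X] K

theorem toMatrix_mulLeft_simple (hT : cs.IsHeckeBasis (θ X) T) (i : B) :
    LinearMap.toMatrix T T (LinearMap.mulLeft K (T (cs.simple i))) =
      (cs.leftHeckeMatrix R i).map θ :=
  LinearMap.toMatrix_eq_map_heckeMatrix T _ (fun _ h he => h.ne (congrArg cs.length he))
    (fun _ => hT.simple_mul_of_isLeftDescent) (fun _ => hT.simple_mul_of_not_isLeftDescent)

theorem toMatrix_mulRight_simple (hT : cs.IsHeckeBasis (θ X) T) (i : B) :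
    LinearMap.toMatrix T T (LinearMap.mulRight K (T (cs.simple i))) =
      (cs.rightHeckeMatrix R i).map θ :=
  LinearMap.toMatrix_eq_map_heckeMatrix T _ (fun _ h he => h.ne (congrArg cs.length he))
    (fun _ => hT.mul_simple_of_isRightDescent) (fun _ => hT.mul_simple_of_not_isRightDescent)

theorem toMatrix_mulLeft_list_prod (hT : cs.IsHeckeBasis (θ X) T) (l : List B) :
    LinearMap.toMatrix T T (LinearMap.mulLeft K (l.map (T ∘ cs.simple)).prod) =
      ((l.map (cs.leftHeckeMatrix R)).prod).map θ := by
  induction l with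
  | nil => simp [LinearMap.mulLeft_one]
  | cons i l ih =>
    rw [List.map_cons, List.prod_cons, LinearMap.mulLeft_mul, LinearMap.toMatrix_comp T T T,
      Function.comp_apply, toMatrix_mulLeft_simple R hT, ih, List.map_cons, List.prod_cons,
      Matrix.map_mul]

theorem toMatrix_mulRight_list_prod (hT : cs.IsHeckeBasis (θ X) T) (m : List B) :
    LinearMap.toMatrix T T (LinearMap.mulRight K (m.map (T ∘ cs.simple)).prod) =
      ((m.map (cs.rightHeckeMatrix R)).reverse.prod).map θ := by
  induction m with
  | nil => simp [LinearMap.mulRight_one]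
  | cons i m ih =>
    rw [List.map_cons, List.prod_cons, LinearMap.mulRight_mul, LinearMap.toMatrix_comp T T T,
      Function.comp_apply, toMatrix_mulRight_simple R hT, ih, List.map_cons, List.reverse_cons,
      List.prod_append, List.prod_singleton, Matrix.map_mul]

theorem toMatrix_mulLeft_comp_mulRight (hT : cs.IsHeckeBasis (θ X) T) {l m : List B}
    (hl : cs.IsReduced l) (hm : cs.IsReduced m) :
    LinearMap.toMatrix T T ((LinearMap.mulLeft K (T (cs.wordProd l))).comp
      (LinearMap.mulRight K (T (cs.wordProd m)))) = (cs.heckeWordMatrix R l m).map θ := by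
  rw [LinearMap.toMatrix_comp T T T, hT.wordProd_of_isReduced hl, hT.wordProd_of_isReduced hm,
    toMatrix_mulLeft_list_prod R hT, toMatrix_mulRight_list_prod R hT, ← Matrix.map_mul,
    heckeWordMatrix, List.prod_append]

end IsHeckeBasis

end HeckeBasis

section Support

variable {B W : Type} [Group W] {M : CoxeterMatrix B} {cs : CoxeterSystem M W}

theorem support_inv (w : W) : cs.support w⁻¹ = cs.support w := by
  suffices h : ∀ w : W, cs.support w⁻¹ ⊆ cs.support w by
    exact (h w).antisymm (by simpa using h w⁻¹)
  rintro w i ⟨l, hl, hlw, hi⟩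
  exact ⟨l.reverse, hl.reverse, by rw [wordProd_reverse, hlw, inv_inv], List.mem_reverse.2 hi⟩

namespace IsHeckeBasis

variable [Fintype W] (R : Type*) {K H : Type*} [CommRing R] [Nontrivial R] [CommRing K]
  [Algebra R[X] K] [Ring H] [Algebra K H] {T : Module.Basis W K H}

local notation "θ" => algebraMap R[X] K

/-- The matrix of `h ↦ T_w * h` does not depend on the reduced word of `w`, and the top
coefficient of its diagonal entry at `a` records whether all letters of the word are left
descents of `a`. -/
theorem forall_mem_support_isLeftDescent_iff (hθ : Function.Injective θ)
    (hT : cs.IsHeckeBasis (θ X) T) {l : List B} (hl : cs.IsReduced l) (a : W) :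
    (∀ i ∈ cs.support (cs.wordProd l), cs.IsLeftDescent a i) ↔ ∀ i ∈ l, cs.IsLeftDescent a i := by
  classical
  refine ⟨fun h i hi => h i ⟨l, hl, rfl, hi⟩, fun h i ⟨l', hl', hl'l, hi⟩ => ?_⟩
  have hnil : cs.IsReduced [] := by simp [IsReduced]
  have hmat : (cs.heckeWordMatrix R l' []).map θ = (cs.heckeWordMatrix R l []).map θ := by
    rw [← toMatrix_mulLeft_comp_mulRight R hT hl' hnil,
      ← toMatrix_mulLeft_comp_mulRight R hT hl hnil, hl'l]
  have hlen : l'.length = l.length := by rw [← hl', ← hl, hl'l]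
  have hcoeff : (cs.heckeWordMatrix R l' [] a a).coeff (l'.length + ([] : List B).length) =
      (cs.heckeWordMatrix R l [] a a).coeff (l.length + ([] : List B).length) := by
    rw [hlen, Matrix.map_injective hθ hmat]
  rw [coeff_heckeWordMatrix_apply_self, coeff_heckeWordMatrix_apply_self] at hcoeff
  by_contra hne
  rw [if_neg fun h' => hne (h'.1 i hi), if_pos ⟨h, by simp⟩] at hcoeff
  exact zero_ne_one hcoeff

theorem forall_mem_support_isRightDescent_iff (hθ : Function.Injective θ)
    (hT : cs.IsHeckeBasis (θ X) T) {m : List B} (hm : cs.IsReduced m) (a : W) :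
    (∀ i ∈ cs.support (cs.wordProd m), cs.IsRightDescent a i) ↔
      ∀ i ∈ m, cs.IsRightDescent a i := by
  have h := hT.forall_mem_support_isLeftDescent_iff R hθ hm.reverse a⁻¹
  simpa only [wordProd_reverse, support_inv, isLeftDescent_inv_iff, List.mem_reverse] using h

end IsHeckeBasis

end Support

end CoxeterSystem

/-- let `N = N^{w,w'} ∈ ℤ[q]` be the trace of `h ↦ T_w h T_{w'⁻¹}` on the
Iwahori–Hecke algebra over `ℚ(q)`, and `n = ℓ(w) + ℓ(w')`.  Then the coefficient of `q^i`
in `N` vanishes for `i > n`, and the coefficient of `q^n` equals the number of `a' ∈ W`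
with `supp(w) ⊆ L_{a'}` and `supp(w') ⊆ R_{a'}`; in particular it is positive. -/
theorem hecke_trace_leading_coeff
    {B W : Type} [Group W] [Fintype W] {M : CoxeterMatrix B} (cs : CoxeterSystem M W)
    (H : Type) [Ring H] [Algebra (RatFunc ℚ) H]
    (T : Module.Basis W (RatFunc ℚ) H)
    (hone : T 1 = 1)
    (hmul : ∀ w w' : W, cs.length (w * w') = cs.length w + cs.length w' →
      T w * T w' = T (w * w'))
    (hquad : ∀ i : B, (T (cs.simple i) + 1) *
      (T (cs.simple i) - algebraMap (RatFunc ℚ) H RatFunc.X) = 0)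
    (w w' : W) (n : ℕ) (hn : n = cs.length w + cs.length w')
    (N : Polynomial ℚ)
    (hN : algebraMap (Polynomial ℚ) (RatFunc ℚ) N =
      LinearMap.trace (RatFunc ℚ) H
        ((LinearMap.mulLeft (RatFunc ℚ) (T w)).comp
          (LinearMap.mulRight (RatFunc ℚ) (T w'⁻¹)))) :
    (∀ i : ℕ, n < i → N.coeff i = 0) ∧
    N.coeff n = ({a' : W | (∀ i ∈ cs.support w, cs.IsLeftDescent a' i) ∧
      (∀ i ∈ cs.support w', cs.IsRightDescent a' i)}).ncard ∧
    0 < N.coeff n := by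
  classical
  have hT : cs.IsHeckeBasis (algebraMap ℚ[X] (RatFunc ℚ) X) T :=
    ⟨hone, hmul, by simpa only [RatFunc.algebraMap_X] using hquad⟩
  have hθ := RatFunc.algebraMap_injective ℚ
  obtain ⟨l, hl, rfl⟩ := cs.exists_isReduced w
  obtain ⟨m, hm, rfl⟩ := cs.exists_isReduced w'
  rw [← CoxeterSystem.wordProd_reverse] at hN
  obtain rfl : N = (cs.heckeWordMatrix ℚ l m.reverse).trace := hθ <| by
    rw [hN, LinearMap.trace_eq_matrix_trace _ T, hT.toMatrix_mulLeft_comp_mulRight ℚ hl hm.reverse,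
      AddMonoidHom.map_trace]
  obtain rfl : n = l.length + m.reverse.length := by rw [hn, hl, hm, List.length_reverse]
  have hcount := CoxeterSystem.coeff_trace_heckeWordMatrix (cs := cs) (R := ℚ) l m.reverse
  simp only [List.mem_reverse, ← hT.forall_mem_support_isLeftDescent_iff ℚ hθ hl,
    ← hT.forall_mem_support_isRightDescent_iff ℚ hθ hm] at hcount
  obtain ⟨a, ha⟩ := cs.exists_forall_isLeftDescent_and_isRightDescent
  refine ⟨fun k hk => CoxeterSystem.coeff_trace_heckeWordMatrix_eq_zero hk, hcount, ?_⟩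
  rw [hcount, Nat.cast_pos, Set.ncard_pos]
  exact ⟨a, fun i _ => (ha i).1, fun i _ => (ha i).2⟩
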